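/- Fix 0 ≤ s ≤ k and a subset J ⊆ {1, …, m} with J ∩ {1, …, s} = ∅ and {s+1, …, k} ⊆ J (the indices of the ray generators of a face γ of σ with p_1, …, p_s ∉ γ and p_{s+1}, …, p_k ∈ γ). Assume for each r = 1, …, s: ⟨q_j, e_2^{(r)}⟩ = 0 for all j ∈ J (e_2^{(r)} ∈ γ^⊥), and there exists j ∈ J with ⟨q_j, e_1^{(r)}⟩ > 0 (e_1^{(r)} ∉ γ^⊥). Let x be a point such that for all u ∈ S: x(u) ≠ 0 if and only if ⟨q_j, u⟩ = 0 for all j ∈ J (x lies in the torus orbit O_γ). Then x*x = x if and only if x(u) = 1 for every u ∈ S with ⟨q_j, u⟩ = 0 for all j ∈ J ∪ {1, …, k}. (This is case (3) of Theorem 7.1: E_γ = O_γ ∩ {χ^u = 1 for all u ∈ cone(τ, γ)^⊥ ∩ S_σ}.) -/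

import Mathlib

open Finset

def pairZ {n : ℕ} (v u : Fin n → ℤ) : ℤ := ∑ i, v i * u i

def InS {n m : ℕ} (q : Fin m → Fin n → ℤ) (u : Fin n → ℤ) : Prop :=
  ∀ j, 0 ≤ pairZ (q j) u

def IsPoint {n m : ℕ} {K : Type*} [Field K] (q : Fin m → Fin n → ℤ)
    (x : (Fin n → ℤ) → K) : Prop :=
  x 0 = 1 ∧ ∀ u v : Fin n → ℤ, InS q u → InS q v → x (u + v) = x u * x v

def Compatible {n m k : ℕ} (hkm : k ≤ m) (q : Fin m → Fin n → ℤ)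
    (e : Fin k → Fin n → ℤ) : Prop :=
  (∀ r s : Fin k, pairZ (q (Fin.castLE hkm s)) (e r) = if r = s then -1 else 0) ∧
  (∀ (r : Fin k) (j : Fin m), k ≤ (j : ℕ) → 0 ≤ pairZ (q j) (e r))

noncomputable def rmul {n m k : ℕ} {K : Type*} [Field K] (hkm : k ≤ m)
    (q : Fin m → Fin n → ℤ) (e1 e2 : Fin k → Fin n → ℤ)
    (x y : (Fin n → ℤ) → K) : (Fin n → ℤ) → K :=
  fun u =>
    ∑ i ∈ Fintype.piFinset (fun r : Fin k =>
        Finset.range ((pairZ (q (Fin.castLE hkm r)) u).toNat + 1)),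
      (∏ r : Fin k, ((pairZ (q (Fin.castLE hkm r)) u).toNat.choose (i r) : K)) *
        x (u + ∑ r : Fin k, (i r : ℤ) • e2 r) *
        y (u + ∑ r : Fin k, (pairZ (q (Fin.castLE hkm r)) u - (i r : ℤ)) • e1 r)

noncomputable def xtau {n m k : ℕ} (K : Type*) [Field K] (hkm : k ≤ m)
    (q : Fin m → Fin n → ℤ) : (Fin n → ℤ) → K :=
  fun u => if ∀ r : Fin k, pairZ (q (Fin.castLE hkm r)) u = 0 then 1 else 0

/-!
Write `a_r = ⟨p_r, u⟩`, `v_i = u + ∑ i_r e₂⁽ʳ⁾` and `w_i = u + ∑ (a_r - i_r) e₁⁽ʳ⁾` for the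
arguments of the `i`-th term of `(x * x)(u)`; by compatibility of the roots both lie in `S`.
A point of `O_γ` vanishes exactly off the face `γ^⊥`. If `u` is off the face, witnessed by
`j ∈ J`, then `⟨q_j, u⟩ ≤ ⟨q_j, v_i⟩ + ⟨q_j, w_i⟩`, so every term of `(x * x)(u)` vanishes, as
does `x u`. If `u` is on the face, then `a_r = 0` for `r ≥ s`, and for `r < s` any `i_r < a_r`
pushes `w_i` off the face in the direction `e₁⁽ʳ⁾ ∉ γ^⊥`; so only the term `i = a` survives, and
it equals `x(v_a) x(u)`, where `v_a` is orthogonal to `J` (as `e₂⁽ʳ⁾ ∈ γ^⊥`) and to all `p_r`.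
Hence `x * x = x` says exactly that `x = 1` on `cone(τ, γ)^⊥ ∩ S`.
-/

theorem pairZ_add_sum_smul {n k : ℕ} (v u : Fin n → ℤ) (a : Fin k → ℤ)
    (e : Fin k → Fin n → ℤ) :
    pairZ v (u + ∑ r, a r • e r) = pairZ v u + ∑ r, a r * pairZ v (e r) := by
  change v ⬝ᵥ (u + ∑ r, a r • e r) = v ⬝ᵥ u + ∑ r, a r * v ⬝ᵥ e r
  simp only [dotProduct_add, dotProduct_sum, dotProduct_smul, smul_eq_mul]

theorem pairZ_add_sum_smul_eq_zero {n k : ℕ} {v u : Fin n → ℤ} {a : Fin k → ℤ}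
    {e : Fin k → Fin n → ℤ} (hu : pairZ v u = 0) (h : ∀ r, a r = 0 ∨ pairZ v (e r) = 0) :
    pairZ v (u + ∑ r, a r • e r) = 0 := by
  rw [pairZ_add_sum_smul, hu, zero_add]
  exact sum_eq_zero fun r _ =>
    (h r).elim (fun h => by rw [h, zero_mul]) fun h => by rw [h, mul_zero]

theorem mem_piFinset_range_toNat_add_one {k : ℕ} {c : Fin k → ℤ} (hc : 0 ≤ c)
    {i : Fin k → ℕ} :
    i ∈ Fintype.piFinset (fun r => range ((c r).toNat + 1)) ↔ ∀ r, (i r : ℤ) ≤ c r := by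
  simp only [Fintype.mem_piFinset, mem_range, Nat.lt_succ_iff, Int.le_toNat (hc _)]

namespace Compatible

variable {n m k : ℕ} {hkm : k ≤ m} {q : Fin m → Fin n → ℤ} {e : Fin k → Fin n → ℤ}

theorem pairZ_castLE_add_sum_smul (he : Compatible hkm q e) (u : Fin n → ℤ) (a : Fin k → ℤ)
    (r : Fin k) :
    pairZ (q (Fin.castLE hkm r)) (u + ∑ r', a r' • e r') =
      pairZ (q (Fin.castLE hkm r)) u - a r := by
  simp only [pairZ_add_sum_smul, he.1, mul_ite, mul_neg, mul_one, mul_zero, sum_ite_eq',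
    mem_univ, if_true, sub_eq_add_neg]

theorem le_of_pairZ_pos (he : Compatible hkm q e) {j : Fin m} {r : Fin k}
    (h : 0 < pairZ (q j) (e r)) : k ≤ (j : ℕ) := by
  by_contra! hj
  obtain ⟨t, rfl⟩ : ∃ t : Fin k, Fin.castLE hkm t = j := ⟨⟨j, hj⟩, rfl⟩
  rw [he.1 r t] at h
  split_ifs at h <;> omega

theorem pairZ_le_add_sum_smul (he : Compatible hkm q e) {j : Fin m} (hj : k ≤ (j : ℕ))
    (u : Fin n → ℤ) {a : Fin k → ℤ} (ha : 0 ≤ a) :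
    pairZ (q j) u ≤ pairZ (q j) (u + ∑ r, a r • e r) := by
  rw [pairZ_add_sum_smul, le_add_iff_nonneg_right]
  exact sum_nonneg fun r _ => mul_nonneg (ha r) (he.2 r j hj)

theorem pairZ_lt_add_sum_smul (he : Compatible hkm q e) {j : Fin m} {r : Fin k}
    (hjr : 0 < pairZ (q j) (e r)) (u : Fin n → ℤ) {a : Fin k → ℤ} (ha : 0 ≤ a)
    (har : 0 < a r) :
    pairZ (q j) u < pairZ (q j) (u + ∑ r, a r • e r) := by
  have hj := he.le_of_pairZ_pos hjr
  rw [pairZ_add_sum_smul, lt_add_iff_pos_right]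
  exact sum_pos' (fun t _ => mul_nonneg (ha t) (he.2 t j hj)) ⟨r, mem_univ r, mul_pos har hjr⟩

theorem inS_add_sum_smul (he : Compatible hkm q e) {u : Fin n → ℤ} (hu : InS q u)
    {a : Fin k → ℤ} (ha : 0 ≤ a) (hau : ∀ r, a r ≤ pairZ (q (Fin.castLE hkm r)) u) :
    InS q (u + ∑ r, a r • e r) := by
  intro j
  rcases lt_or_ge (j : ℕ) k with hj | hj
  · obtain ⟨r, rfl⟩ : ∃ r : Fin k, Fin.castLE hkm r = j := ⟨⟨j, hj⟩, rfl⟩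
    rw [he.pairZ_castLE_add_sum_smul]
    linarith [hau r]
  · exact (hu j).trans (he.pairZ_le_add_sum_smul hj u ha)

end Compatible

section rmul

variable {n m k : ℕ} {K : Type*} [Field K] {hkm : k ≤ m} {q : Fin m → Fin n → ℤ}
  {e1 e2 : Fin k → Fin n → ℤ} {x y : (Fin n → ℤ) → K} {u : Fin n → ℤ}

theorem rmul_eq_mul_of_forall_pairZ_eq_zero
    (hu : ∀ r, pairZ (q (Fin.castLE hkm r)) u = 0) :
    rmul hkm q e1 e2 x y u = x u * y u := by
  simp [rmul, hu, Fintype.piFinset_singleton]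

theorem pairZ_le_pairZ_add_pairZ (he1 : Compatible hkm q e1) (he2 : Compatible hkm q e2)
    (hu : InS q u) {i : Fin k → ℤ} (hi0 : 0 ≤ i)
    (hi : ∀ r, i r ≤ pairZ (q (Fin.castLE hkm r)) u) (j : Fin m) :
    pairZ (q j) u ≤ pairZ (q j) (u + ∑ r, i r • e2 r) +
      pairZ (q j) (u + ∑ r, (pairZ (q (Fin.castLE hkm r)) u - i r) • e1 r) := by
  rcases lt_or_ge (j : ℕ) k with hj | hj
  · obtain ⟨r, rfl⟩ : ∃ r : Fin k, Fin.castLE hkm r = j := ⟨⟨j, hj⟩, rfl⟩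
    rw [he1.pairZ_castLE_add_sum_smul, he2.pairZ_castLE_add_sum_smul]
    linarith
  · have hw := he1.inS_add_sum_smul hu (a := fun r => pairZ (q (Fin.castLE hkm r)) u - i r)
      (fun r => sub_nonneg.2 (hi r)) (fun r => sub_le_self _ (hi0 r))
    linarith [he2.pairZ_le_add_sum_smul hj u hi0, hw j]

theorem rmul_eq_zero_of_pairZ_pos (he1 : Compatible hkm q e1) (he2 : Compatible hkm q e2)
    (hu : InS q u) {j : Fin m} (hj : 0 < pairZ (q j) u)
    (hx : ∀ v, InS q v → x v ≠ 0 → pairZ (q j) v = 0)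
    (hy : ∀ v, InS q v → y v ≠ 0 → pairZ (q j) v = 0) :
    rmul hkm q e1 e2 x y u = 0 := by
  refine sum_eq_zero fun i hi => ?_
  rw [mem_piFinset_range_toNat_add_one fun r => hu _] at hi
  have hi0 : (0 : Fin k → ℤ) ≤ fun r => (i r : ℤ) := fun r => Int.natCast_nonneg _
  have hv := he2.inS_add_sum_smul hu hi0 hi
  have hw := he1.inS_add_sum_smul hu (a := fun r => pairZ (q (Fin.castLE hkm r)) u - i r)
    (fun r => sub_nonneg.2 (hi r)) (fun r => sub_le_self _ (hi0 r))
  suffices x (u + ∑ r, (i r : ℤ) • e2 r) = 0 ∨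
      y (u + ∑ r, (pairZ (q (Fin.castLE hkm r)) u - i r) • e1 r) = 0 by
    rcases this with h | h <;> rw [h] <;> ring
  by_contra! ⟨hxv, hyw⟩
  have := pairZ_le_pairZ_add_pairZ he1 he2 hu hi0 hi j
  rw [hx _ hv hxv, hy _ hw hyw] at this
  omega

theorem rmul_eq_mul_of_forall_mem (he1 : Compatible hkm q e1) (hu : InS q u)
    {J : Finset (Fin m)} (huJ : ∀ j ∈ J, pairZ (q j) u = 0)
    (hJ : ∀ r, 0 < pairZ (q (Fin.castLE hkm r)) u → ∃ j ∈ J, 0 < pairZ (q j) (e1 r))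
    (hy : ∀ v, InS q v → y v ≠ 0 → ∀ j ∈ J, pairZ (q j) v = 0) :
    rmul hkm q e1 e2 x y u = x (u + ∑ r, pairZ (q (Fin.castLE hkm r)) u • e2 r) * y u := by
  have hmem (i : Fin k → ℕ) := mem_piFinset_range_toNat_add_one (i := i)
    (c := fun r => pairZ (q (Fin.castLE hkm r)) u) fun r => hu _
  rw [rmul, sum_eq_single_of_mem (fun r => (pairZ (q (Fin.castLE hkm r)) u).toNat)
    ((hmem _).2 fun r => (Int.toNat_of_nonneg (hu _)).le)]
  · simp [Int.toNat_of_nonneg (hu _)]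
  intro i hi hne
  rw [hmem] at hi
  obtain ⟨r, hr⟩ := Function.ne_iff.1 hne
  have hlt : (i r : ℤ) < pairZ (q (Fin.castLE hkm r)) u :=
    (hi r).lt_of_ne fun h => hr (by simp [← h])
  obtain ⟨j, hjJ, hjr⟩ := hJ r (by omega)
  have hw := he1.inS_add_sum_smul hu (a := fun r => pairZ (q (Fin.castLE hkm r)) u - i r)
    (fun r => sub_nonneg.2 (hi r)) (fun r => sub_le_self _ (Int.natCast_nonneg _))
  have hpos := he1.pairZ_lt_add_sum_smul hjr u (fun r => sub_nonneg.2 (hi r)) (sub_pos.2 hlt)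
  have hyw : y (u + ∑ r, (pairZ (q (Fin.castLE hkm r)) u - i r) • e1 r) = 0 := by
    by_contra h
    linarith [hy _ hw h j hjJ, huJ j hjJ]
  rw [hyw, mul_zero]

end rmul

theorem statement_14_general {n m k : ℕ} {K : Type*} [Field K]
    (hkm : k ≤ m)
    (q : Fin m → Fin n → ℤ) (e1 e2 : Fin k → Fin n → ℤ)
    (he1 : Compatible hkm q e1) (he2 : Compatible hkm q e2)
    (s : ℕ) (J : Finset (Fin m))
    (hJk : ∀ j : Fin m, s ≤ (j : ℕ) → (j : ℕ) < k → j ∈ J)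
    (hrt2 : ∀ r : Fin k, (r : ℕ) < s → ∀ j ∈ J, pairZ (q j) (e2 r) = 0)
    (hrt1 : ∀ r : Fin k, (r : ℕ) < s → ∃ j ∈ J, 0 < pairZ (q j) (e1 r))
    (x : (Fin n → ℤ) → K)
    (horb : ∀ u : Fin n → ℤ, InS q u → (x u ≠ 0 ↔ ∀ j ∈ J, pairZ (q j) u = 0)) :
    (∀ u : Fin n → ℤ, InS q u → rmul hkm q e1 e2 x x u = x u) ↔
    (∀ u : Fin n → ℤ, InS q u →
      (∀ j : Fin m, (j ∈ J ∨ (j : ℕ) < k) → pairZ (q j) u = 0) → x u = 1) := by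
  have hxJ (v) (hv : InS q v) : x v ≠ 0 → ∀ j ∈ J, pairZ (q j) v = 0 := (horb v hv).1
  constructor
  · intro h u hu hu0
    have hxu : x u ≠ 0 := (horb u hu).2 fun j hj => hu0 j (Or.inl hj)
    have hp (r : Fin k) : pairZ (q (Fin.castLE hkm r)) u = 0 := hu0 _ (Or.inr r.isLt)
    rw [← mul_eq_left₀ hxu, ← rmul_eq_mul_of_forall_pairZ_eq_zero hp]
    exact h u hu
  intro h u hu
  by_cases huJ : ∀ j ∈ J, pairZ (q j) u = 0
  · have hpr (r : Fin k) (hr : s ≤ (r : ℕ)) : pairZ (q (Fin.castLE hkm r)) u = 0 :=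
      huJ _ (hJk _ hr r.isLt)
    have hJ (r : Fin k) (hr : 0 < pairZ (q (Fin.castLE hkm r)) u) :
        ∃ j ∈ J, 0 < pairZ (q j) (e1 r) :=
      hrt1 r (by by_contra! hrs; exact hr.ne' (hpr r hrs))
    have hv := he2.inS_add_sum_smul hu (fun r => hu _) fun _ => le_rfl
    rw [rmul_eq_mul_of_forall_mem he1 hu huJ hJ hxJ, h _ hv, one_mul]
    rintro j (hjJ | hjk)
    · exact pairZ_add_sum_smul_eq_zero (huJ j hjJ) fun r =>
        (lt_or_ge (r : ℕ) s).symm.imp (hpr r) fun hr => hrt2 r hr j hjJ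
    · obtain ⟨r, rfl⟩ : ∃ r : Fin k, Fin.castLE hkm r = j := ⟨⟨j, hjk⟩, rfl⟩
      rw [he2.pairZ_castLE_add_sum_smul, sub_self]
  · push Not at huJ
    obtain ⟨j, hjJ, hj⟩ := huJ
    have hxu : x u = 0 := by_contra fun h => hj (hxJ u hu h j hjJ)
    rw [hxu]
    exact rmul_eq_zero_of_pairZ_pos he1 he2 hu ((hu j).lt_of_ne' hj)
      (fun v hv h => hxJ v hv h j hjJ) (fun v hv h => hxJ v hv h j hjJ)

theorem statement_14 {n m k : ℕ} {K : Type*} [Field K] [CharZero K]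
    (hn : 1 ≤ n) (hk : 1 ≤ k) (hkm : k ≤ m)
    (q : Fin m → Fin n → ℤ) (e1 e2 : Fin k → Fin n → ℤ)
    (he1 : Compatible hkm q e1) (he2 : Compatible hkm q e2)
    (s : ℕ) (hs : s ≤ k) (J : Finset (Fin m))
    (hJs : ∀ j ∈ J, ¬ (j : ℕ) < s)
    (hJk : ∀ j : Fin m, s ≤ (j : ℕ) → (j : ℕ) < k → j ∈ J)
    (hrt2 : ∀ r : Fin k, (r : ℕ) < s → ∀ j ∈ J, pairZ (q j) (e2 r) = 0)
    (hrt1 : ∀ r : Fin k, (r : ℕ) < s → ∃ j ∈ J, 0 < pairZ (q j) (e1 r))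
    (x : (Fin n → ℤ) → K) (hx : IsPoint q x)
    (horb : ∀ u : Fin n → ℤ, InS q u → (x u ≠ 0 ↔ ∀ j ∈ J, pairZ (q j) u = 0)) :
    (∀ u : Fin n → ℤ, InS q u → rmul hkm q e1 e2 x x u = x u) ↔
    (∀ u : Fin n → ℤ, InS q u →
      (∀ j : Fin m, (j ∈ J ∨ (j : ℕ) < k) → pairZ (q j) u = 0) → x u = 1) :=
  statement_14_general hkm q e1 e2 he1 he2 s J hJk hrt2 hrt1 x horb
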